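/- Suppose d ∈ [0,1), ω ∈ ℝ, g ≠ 0, κ, γ > 0, and C_b = g² d/(κγ) < 1. Let (A, S, D) be a solution of the Maxwell–Bloch equations on [0,∞). Then for every t ≥ 0, |S(t)|² + (D(t) − d)²/4 ≤ exp( −(1 − C_b)·min{κ, γ}·t ) · ( (4κd/γ)|A(0)|² + (4κ/γ + 1)|S(0)|² + (κ/γ + 1/4)(D(0) − d)² ). -/

import Mathlib

/-!
Put `w = ‖S‖² + (D - d)²/4` and `G = d‖A‖² + w`. Along solutions the oscillating terms drop out:
`G' = -2κd‖A‖² - 2γ‖S‖² - γ(D - d)² + 4gd Re(conj A S)` and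
`w' = -2γ‖S‖² - γ(D - d)² + 2gd Re(conj A S)`.
With `L = (1 - C_b) min κ γ` one has `4g²d ≤ (1 + C_b)²κγ ≤ (2κ - L)(2γ - L)`, so AM–GM on the
cross term gives `G' ≤ -L G`, hence `G(t) ≤ e^{-Lt} G(0)`. A second AM–GM gives
`w' ≤ -γ w + (g²d/γ) G`, and since `γ - L ≥ C_b γ` the function
`u = w - e^{-Lt} (w(0) + (4κ/γ) G(0))` satisfies `u' ≤ -γ u` with `u(0) ≤ 0`, so Grönwall's
inequality keeps it nonpositive.
-/

open Set ComplexConjugate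

theorem le_mul_exp_of_hasDerivAt_le_mul {f f' : ℝ → ℝ} {K : ℝ}
    (hf : ∀ t ≥ (0 : ℝ), HasDerivAt f (f' t) t) (hbound : ∀ t ≥ (0 : ℝ), f' t ≤ K * f t) :
    ∀ t ≥ (0 : ℝ), f t ≤ f 0 * Real.exp (K * t) := by
  intro t ht
  have hcont : ContinuousOn f (Icc 0 t) := fun x hx => (hf x hx.1).continuousAt.continuousWithinAt
  simpa [gronwallBound_ε0] using le_gronwallBound_of_liminf_deriv_right_le (K := K) (ε := 0)
    hcont (fun x hx _ hr => (hf x hx.1).hasDerivWithinAt.liminf_right_slope_le hr) le_rfl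
    (fun x hx => by simpa using hbound x hx.1) t ⟨ht, le_rfl⟩

theorem Complex.two_mul_re_conj_mul_le {c p q : ℝ} (a b : ℂ) (hcpq : c ^ 2 ≤ p * q)
    (hp : 0 ≤ p) (hq : 0 ≤ q) : 2 * c * (conj a * b).re ≤ p * ‖a‖ ^ 2 + q * ‖b‖ ^ 2 := by
  have hre : |(conj a * b).re| ≤ ‖a‖ * ‖b‖ := by
    simpa using Complex.abs_re_le_norm (conj a * b)
  have hsq : (2 * |c| * (‖a‖ * ‖b‖)) ^ 2 ≤ (p * ‖a‖ ^ 2 + q * ‖b‖ ^ 2) ^ 2 := by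
    nlinarith [sq_nonneg (p * ‖a‖ ^ 2 - q * ‖b‖ ^ 2), sq_abs c,
      mul_nonneg (sq_nonneg ‖a‖) (sq_nonneg ‖b‖)]
  calc 2 * c * (conj a * b).re ≤ |2 * c * (conj a * b).re| := le_abs_self _
    _ = 2 * |c| * |(conj a * b).re| := by rw [abs_mul, abs_mul, abs_two]
    _ ≤ 2 * |c| * (‖a‖ * ‖b‖) := by gcongr
    _ ≤ p * ‖a‖ ^ 2 + q * ‖b‖ ^ 2 :=
      (pow_le_pow_iff_left₀ (by positivity) (by positivity) two_ne_zero).mp hsq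

theorem Complex.hasDerivAt_norm_sq_of_damped {z : ℝ → ℂ} {μ ω t : ℝ} {f : ℂ}
    (hz : HasDerivAt z (-((μ : ℂ) + ω * I) * z t + f) t) :
    HasDerivAt (fun t => ‖z t‖ ^ 2) (-2 * μ * ‖z t‖ ^ 2 + 2 * (conj (z t) * f).re) t := by
  convert hz.norm_sq using 1
  rw [Complex.inner, Complex.sq_norm, Complex.normSq_apply]
  simp only [Complex.mul_re, Complex.mul_im, Complex.add_re, Complex.add_im, Complex.neg_re,
    Complex.neg_im, Complex.ofReal_re, Complex.ofReal_im, Complex.I_re, Complex.I_im,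
    Complex.conj_re, Complex.conj_im]
  ring

namespace MaxwellBloch

noncomputable def matterEnergy (d : ℝ) (S : ℝ → ℂ) (D : ℝ → ℝ) (t : ℝ) : ℝ :=
  ‖S t‖ ^ 2 + (D t - d) ^ 2 / 4

noncomputable def energy (d : ℝ) (A S : ℝ → ℂ) (D : ℝ → ℝ) (t : ℝ) : ℝ :=
  d * ‖A t‖ ^ 2 + matterEnergy d S D t

structure IsSolution (ω g κ γ d : ℝ) (A S : ℝ → ℂ) (D : ℝ → ℝ) : Prop where
  hasDerivAt_A : ∀ t ≥ (0 : ℝ),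
    HasDerivAt A (-((κ : ℂ) + (ω : ℂ) * Complex.I) * A t + (g : ℂ) * S t) t
  hasDerivAt_S : ∀ t ≥ (0 : ℝ),
    HasDerivAt S (-((γ : ℂ) + (ω : ℂ) * Complex.I) * S t + (g : ℂ) * A t * (D t : ℂ)) t
  hasDerivAt_D : ∀ t ≥ (0 : ℝ),
    HasDerivAt D (-4 * g * (conj (A t) * S t).re - 2 * γ * (D t - d)) t

variable {ω g κ γ d : ℝ} {A S : ℝ → ℂ} {D : ℝ → ℝ}

lemma matterEnergy_nonneg (t : ℝ) : 0 ≤ matterEnergy d S D t := by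
  unfold matterEnergy; positivity

lemma energy_nonneg (hd : 0 ≤ d) (t : ℝ) : 0 ≤ energy d A S D t :=
  add_nonneg (mul_nonneg hd (sq_nonneg _)) (matterEnergy_nonneg t)

namespace IsSolution

lemma hasDerivAt_matterEnergy (h : IsSolution ω g κ γ d A S D) {t : ℝ} (ht : 0 ≤ t) :
    HasDerivAt (matterEnergy d S D)
      (-2 * γ * ‖S t‖ ^ 2 - γ * (D t - d) ^ 2 + 2 * g * d * (conj (A t) * S t).re) t := by
  have hS := Complex.hasDerivAt_norm_sq_of_damped (h.hasDerivAt_S t ht)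
  have hD := ((h.hasDerivAt_D t ht).sub_const d).pow 2
  refine (hS.add (hD.div_const 4)).congr_deriv ?_
  simp only [Complex.mul_re, Complex.mul_im, Complex.conj_re, Complex.conj_im, Complex.ofReal_re,
    Complex.ofReal_im]
  ring

lemma hasDerivAt_energy (h : IsSolution ω g κ γ d A S D) {t : ℝ} (ht : 0 ≤ t) :
    HasDerivAt (energy d A S D) (-2 * κ * d * ‖A t‖ ^ 2 - 2 * γ * ‖S t‖ ^ 2
      - γ * (D t - d) ^ 2 + 4 * g * d * (conj (A t) * S t).re) t := by
  have hA := Complex.hasDerivAt_norm_sq_of_damped (h.hasDerivAt_A t ht)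
  refine ((hA.const_mul d).add (h.hasDerivAt_matterEnergy ht)).congr_deriv ?_
  simp only [Complex.mul_re, Complex.mul_im, Complex.ofReal_re, Complex.ofReal_im]
  ring

theorem energy_le (h : IsSolution ω g κ γ d A S D) (hd : 0 ≤ d) {L : ℝ} (hL : 0 ≤ L)
    (hLκ : L ≤ 2 * κ) (hLγ : L ≤ 2 * γ) (hgL : 4 * g ^ 2 * d ≤ (2 * κ - L) * (2 * γ - L)) :
    ∀ t ≥ (0 : ℝ), energy d A S D t ≤ energy d A S D 0 * Real.exp (-L * t) := by
  refine le_mul_exp_of_hasDerivAt_le_mul (fun t ht => h.hasDerivAt_energy ht) fun t _ => ?_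
  have hcross : 2 * (2 * g * d) * (conj (A t) * S t).re ≤
      (2 * κ - L) * d * ‖A t‖ ^ 2 + (2 * γ - L) * ‖S t‖ ^ 2 :=
    Complex.two_mul_re_conj_mul_le _ _ (by nlinarith [mul_le_mul_of_nonneg_left hgL hd])
      (by nlinarith) (by linarith)
  have hdecay : 0 ≤ (γ - L / 4) * (D t - d) ^ 2 := mul_nonneg (by linarith) (sq_nonneg _)
  unfold energy matterEnergy
  linarith

theorem matterEnergy_le (h : IsSolution ω g κ γ d A S D) (hd : 0 ≤ d) (hγ : 0 < γ) {L c : ℝ}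
    (hLγ : L ≤ γ) (hc : 0 ≤ c) (hgc : g ^ 2 * d ≤ γ * (γ - L) * c)
    (hE : ∀ t ≥ (0 : ℝ), energy d A S D t ≤ energy d A S D 0 * Real.exp (-L * t)) :
    ∀ t ≥ (0 : ℝ), matterEnergy d S D t ≤
      Real.exp (-L * t) * (matterEnergy d S D 0 + c * energy d A S D 0) := by
  set M := matterEnergy d S D 0 + c * energy d A S D 0 with hM
  have hw0 : 0 ≤ matterEnergy d S D 0 := matterEnergy_nonneg 0
  have hE0 : 0 ≤ energy d A S D 0 := energy_nonneg hd 0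
  have hgap : g ^ 2 * d / γ * energy d A S D 0 ≤ (γ - L) * M := by
    rw [div_mul_eq_mul_div, div_le_iff₀ hγ, hM]
    nlinarith [mul_le_mul_of_nonneg_right hgc hE0,
      mul_nonneg (mul_nonneg (sub_nonneg.2 hLγ) hγ.le) hw0]
  have hexp (t : ℝ) : HasDerivAt (fun t => Real.exp (-L * t)) (-L * Real.exp (-L * t)) t := by
    simpa [mul_comm] using ((hasDerivAt_id t).const_mul (-L)).exp
  have hbound : ∀ t ≥ (0 : ℝ), -2 * γ * ‖S t‖ ^ 2 - γ * (D t - d) ^ 2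
      + 2 * g * d * (conj (A t) * S t).re - M * (-L * Real.exp (-L * t)) ≤
      -γ * (matterEnergy d S D t - M * Real.exp (-L * t)) := by
    intro t ht
    have hcross : 2 * (g * d) * (conj (A t) * S t).re ≤
        (g * d) ^ 2 / γ * ‖A t‖ ^ 2 + γ * ‖S t‖ ^ 2 :=
      Complex.two_mul_re_conj_mul_le _ _ (div_mul_cancel₀ _ hγ.ne').ge (by positivity) hγ.le
    have hA_le : d * ‖A t‖ ^ 2 ≤ energy d A S D 0 * Real.exp (-L * t) :=
      (le_add_of_nonneg_right (matterEnergy_nonneg t)).trans (hE t ht)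
    have hfield : (g * d) ^ 2 / γ * ‖A t‖ ^ 2 ≤
        g ^ 2 * d / γ * (energy d A S D 0 * Real.exp (-L * t)) :=
      calc (g * d) ^ 2 / γ * ‖A t‖ ^ 2 = g ^ 2 * d / γ * (d * ‖A t‖ ^ 2) := by ring
        _ ≤ _ := by gcongr
    have hgap' := mul_le_mul_of_nonneg_right hgap (Real.exp_pos (-L * t)).le
    unfold matterEnergy
    linarith [mul_nonneg hγ.le (sq_nonneg (D t - d))]
  have hu := le_mul_exp_of_hasDerivAt_le_mul
    (f := fun t => matterEnergy d S D t - M * Real.exp (-L * t))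
    (fun t ht => (h.hasDerivAt_matterEnergy ht).sub ((hexp t).const_mul M)) hbound
  have hu0 : matterEnergy d S D 0 - M * Real.exp (-L * 0) ≤ 0 := by
    rw [mul_zero, Real.exp_zero, mul_one, hM]
    nlinarith
  intro t ht
  nlinarith [hu t ht, mul_nonpos_of_nonpos_of_nonneg hu0 (Real.exp_pos (-γ * t)).le]

end IsSolution

end MaxwellBloch

open MaxwellBloch in
theorem maxwell_bloch_decay_of_Cb_lt_one
    (ω g κ γ d : ℝ) (hκ : 0 < κ) (hγ : 0 < γ)
    (hd0 : 0 ≤ d)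
    (hCb : g ^ 2 * d / (κ * γ) < 1)
    (A S : ℝ → ℂ) (D : ℝ → ℝ)
    (hA : ∀ t ≥ (0 : ℝ),
      HasDerivAt A (-((κ : ℂ) + (ω : ℂ) * Complex.I) * A t + (g : ℂ) * S t) t)
    (hS : ∀ t ≥ (0 : ℝ),
      HasDerivAt S (-((γ : ℂ) + (ω : ℂ) * Complex.I) * S t + (g : ℂ) * A t * (D t : ℂ)) t)
    (hD : ∀ t ≥ (0 : ℝ),
      HasDerivAt D (-4 * g * ((starRingEnd ℂ) (A t) * S t).re - 2 * γ * (D t - d)) t) :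
    ∀ t ≥ (0 : ℝ),
      ‖S t‖ ^ 2 + (D t - d) ^ 2 / 4 ≤
        Real.exp (-(1 - g ^ 2 * d / (κ * γ)) * min κ γ * t) *
          (4 * κ * d / γ * ‖A 0‖ ^ 2 + (4 * κ / γ + 1) * ‖S 0‖ ^ 2 +
            (κ / γ + 1 / 4) * (D 0 - d) ^ 2) := by
  intro t ht
  set s := g ^ 2 * d / (κ * γ) with hs
  have hgd : g ^ 2 * d = s * (κ * γ) := by rw [hs]; field_simp
  have hs0 : 0 ≤ s := by positivity
  set L := (1 - s) * min κ γ with hL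
  have hL0 : 0 ≤ L := mul_nonneg (by linarith) (le_min hκ.le hγ.le)
  have hLκ : L ≤ (1 - s) * κ := mul_le_mul_of_nonneg_left (min_le_left κ γ) (by linarith)
  have hLγ : L ≤ (1 - s) * γ := mul_le_mul_of_nonneg_left (min_le_right κ γ) (by linarith)
  have h2κ : (1 + s) * κ ≤ 2 * κ - L := by linarith
  have h2γ : (1 + s) * γ ≤ 2 * γ - L := by linarith
  have hsol : IsSolution ω g κ γ d A S D := ⟨hA, hS, hD⟩
  have hE := hsol.energy_le hd0 hL0 (by nlinarith) (by nlinarith) (by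
    nlinarith [mul_le_mul h2κ h2γ (by positivity) (by nlinarith),
      mul_nonneg (sq_nonneg (1 - s)) (mul_pos hκ hγ).le])
  have hW := hsol.matterEnergy_le hd0 hγ (c := 4 * κ / γ) (by nlinarith [mul_nonneg hs0 hγ.le])
    (by positivity) (by rw [hgd]; field_simp; nlinarith [mul_pos hκ hγ]) hE t ht
  unfold energy matterEnergy at hW
  convert hW using 2
  · rw [hL, neg_mul]
  · field_simp
    ring
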